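/- Suppose a sequence of nonnegative reals (‖u^{(j)}‖) with ‖u^{(0)}‖ = 1 satisfies ‖u^{(j+1)}‖ ≤ M_n·∑_{s=0}^{j} ‖u^{(j−s)}‖·‖u^{(s)}‖ for all j ≥ 0, where M_n > 0 and r_n := 4M_n < 1. Then the series ∑_{j=0}^{∞} ‖u^{(j)}‖ converges, and for every m ≥ 0, ∑_{j=m+1}^{∞} ‖u^{(j)}‖ ≤ (r_n)^{m+1}/((1−r_n)·(m+2)·√(π(m+1))). -/

import Mathlib

/-!
Comparing the recursion with that of the Catalan numbers, `catalan (n + 1) = ∑ catalan (n - s) * catalan s`,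
gives `u n ≤ M ^ n * catalan n` by strong induction. Since `(n + 1) * catalan n` is the central binomial
coefficient, Wallis' inequality `W n ≥ (2n+1)/(2n+2) · π/2` yields `catalan (n + 1) ≤ 4 ^ (n + 1) / ((n + 2) √(π (n + 1)))`.
The denominator grows with `n`, so the tail from `m + 1` on is dominated by a geometric series of ratio `r = 4 M`.
-/

open Real Finset
open scoped Nat

theorem Real.Wallis.W_mul_sq_centralBinom (n : ℕ) :
    W n * ((n.centralBinom : ℝ) ^ 2 * (2 * n + 1)) = 16 ^ n := by
  have hfac : (2 * n)! = n.centralBinom * n ! ^ 2 := by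
    rw [Nat.centralBinom_eq_two_mul_choose, two_mul, ← Nat.add_choose_mul_factorial_mul_factorial,
      sq, mul_assoc]
  have hbinom_ne := n.centralBinom_ne_zero
  rw [W_eq_factorial_ratio, show ((2 * n)! : ℝ) = n.centralBinom * n ! ^ 2 by exact_mod_cast hfac,
    pow_mul]
  field_simp
  norm_num

theorem Nat.centralBinom_mul_sqrt_le_four_pow (n : ℕ) :
    (n.centralBinom : ℝ) * √(π * n) ≤ 4 ^ n := by
  rw [← pow_le_pow_iff_left₀ (by positivity) (by positivity) two_ne_zero, mul_pow,
    sq_sqrt (by positivity), ← pow_mul, pow_mul', show (4 : ℝ) ^ 2 = 16 by norm_num]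
  have hquad : π * n ≤ (2 * n + 1) * ((2 * n + 1) / (2 * n + 2) * (π / 2)) := by
    rw [show (2 * n + 1) * ((2 * n + 1) / (2 * n + 2) * (π / 2)) = π * (2 * n + 1) ^ 2 / (4 * (n + 1))
      by field_simp; ring, le_div_iff₀ (by positivity)]
    nlinarith [pi_pos]
  calc (n.centralBinom : ℝ) ^ 2 * (π * n)
      ≤ n.centralBinom ^ 2 * ((2 * n + 1) * ((2 * n + 1) / (2 * n + 2) * (π / 2))) := by gcongr
    _ ≤ n.centralBinom ^ 2 * ((2 * n + 1) * Wallis.W n) := by gcongr; exact Wallis.le_W n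
    _ = 16 ^ n := by rw [← Wallis.W_mul_sq_centralBinom n]; ring

theorem catalan_le_four_pow (n : ℕ) : catalan n ≤ 4 ^ n := by
  rw [catalan_eq_centralBinom_div]
  exact (Nat.div_le_self _ _).trans n.centralBinom_le_four_pow

theorem catalan_succ_le_four_pow_div (n : ℕ) :
    (catalan (n + 1) : ℝ) ≤ 4 ^ (n + 1) / ((n + 2) * √(π * (n + 1))) := by
  have hC : ((n : ℝ) + 2) * catalan (n + 1) = (n + 1).centralBinom := by
    exact_mod_cast succ_mul_catalan_eq_centralBinom (n + 1)
  have hbinom := (n + 1).centralBinom_mul_sqrt_le_four_pow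
  push_cast at hbinom
  rw [le_div_iff₀ (by positivity)]
  calc (catalan (n + 1) : ℝ) * ((n + 2) * √(π * (n + 1)))
      = (n + 1).centralBinom * √(π * (n + 1)) := by rw [← hC]; ring
    _ ≤ 4 ^ (n + 1) := hbinom

theorem pow_mul_catalan_le_four_mul_pow {M : ℝ} (hM : 0 ≤ M) (n : ℕ) :
    M ^ n * catalan n ≤ (4 * M) ^ n := by
  rw [mul_pow, mul_comm (4 ^ n)]
  gcongr
  exact_mod_cast catalan_le_four_pow n

theorem pow_succ_mul_catalan_succ_le {M : ℝ} (hM : 0 ≤ M) (n : ℕ) :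
    M ^ (n + 1) * catalan (n + 1) ≤ (4 * M) ^ (n + 1) / ((n + 2) * √(π * (n + 1))) := by
  calc M ^ (n + 1) * catalan (n + 1)
      ≤ M ^ (n + 1) * (4 ^ (n + 1) / ((n + 2) * √(π * (n + 1)))) := by
        gcongr; exact catalan_succ_le_four_pow_div n
    _ = (4 * M) ^ (n + 1) / ((n + 2) * √(π * (n + 1))) := by rw [mul_pow]; ring

theorem le_pow_mul_catalan_of_le_mul_sum {u : ℕ → ℝ} {M : ℝ} (hu : ∀ j, 0 ≤ u j) (h0 : u 0 ≤ 1)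
    (hM : 0 ≤ M) (hrec : ∀ j, u (j + 1) ≤ M * ∑ s ∈ range (j + 1), u (j - s) * u s) (n : ℕ) :
    u n ≤ M ^ n * catalan n := by
  induction n using Nat.strong_induction_on with
  | _ n ih =>
  rcases n with _ | n
  · simpa using h0
  have hcat : (catalan (n + 1) : ℝ) = ∑ s ∈ range (n + 1), (catalan (n - s) * catalan s : ℝ) := by
    rw [catalan_succ', Nat.sum_antidiagonal_eq_sum_range_succ (fun i j => catalan i * catalan j)]
    push_cast
    exact sum_congr rfl fun s _ => mul_comm _ _
  calc u (n + 1) ≤ M * ∑ s ∈ range (n + 1), u (n - s) * u s := hrec n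
    _ ≤ M * ∑ s ∈ range (n + 1), (M ^ (n - s) * catalan (n - s)) * (M ^ s * catalan s) := by
      gcongr with s hs
      · exact hu _
      · exact ih _ (by omega)
      · exact ih _ (by simp at hs; omega)
    _ = M ^ (n + 1) * catalan (n + 1) := by
      rw [hcat, mul_sum, mul_sum]
      refine sum_congr rfl fun s hs => ?_
      have : M ^ (n - s) * M ^ s = M ^ n := by
        rw [← pow_add, Nat.sub_add_cancel (by simp at hs; omega)]
      rw [pow_succ', ← this]
      ring

theorem tsum_le_div_one_sub_of_le_mul_pow {a : ℕ → ℝ} {C r : ℝ} (hr0 : 0 ≤ r) (hr1 : r < 1)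
    (ha : Summable a) (hle : ∀ k, a k ≤ C * r ^ k) : ∑' k, a k ≤ C / (1 - r) :=
  hasSum_le hle ha.hasSum ((hasSum_geometric_of_lt_one hr0 hr1).mul_left C)

theorem stmt_12 (u : ℕ → ℝ) (hpos : ∀ j, 0 ≤ u j) (h0 : u 0 = 1)
    (M : ℝ) (hM : 0 < M)
    (hrec : ∀ j : ℕ, u (j + 1) ≤ M * ∑ s ∈ Finset.range (j + 1), u (j - s) * u s)
    (r : ℝ) (hr : r = 4 * M) (hr1 : r < 1) :
    Summable u ∧
      ∀ m : ℕ, (∑' j : ℕ, u (m + 1 + j)) ≤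
        r ^ (m + 1) / ((1 - r) * ((m : ℝ) + 2) * Real.sqrt (π * ((m : ℝ) + 1))) := by
  subst hr
  have hr0 : 0 ≤ 4 * M := by positivity
  have hmaj := le_pow_mul_catalan_of_le_mul_sum hpos h0.le hM.le hrec
  have hu : Summable u := (summable_geometric_of_lt_one hr0 hr1).of_nonneg_of_le hpos
    fun n => (hmaj n).trans (pow_mul_catalan_le_four_mul_pow hM.le n)
  refine ⟨hu, fun m => ?_⟩
  have htail : Summable fun k => u (m + 1 + k) := by
    simpa only [add_comm] using (summable_nat_add_iff (m + 1)).2 hu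
  have hterm (k : ℕ) :
      u (m + 1 + k) ≤ (4 * M) ^ (m + 1) / ((m + 2) * √(π * (m + 1))) * (4 * M) ^ k := by
    calc u (m + 1 + k) = u (m + k + 1) := by rw [add_right_comm]
      _ ≤ (4 * M) ^ (m + k + 1) / ((↑(m + k) + 2) * √(π * (↑(m + k) + 1))) :=
        (hmaj _).trans (pow_succ_mul_catalan_succ_le hM.le _)
      _ ≤ (4 * M) ^ (m + k + 1) / ((m + 2) * √(π * (m + 1))) := by gcongr <;> simp
      _ = _ := by ring
  calc ∑' k, u (m + 1 + k)
      ≤ (4 * M) ^ (m + 1) / ((m + 2) * √(π * (m + 1))) / (1 - 4 * M) :=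
        tsum_le_div_one_sub_of_le_mul_pow hr0 hr1 htail hterm
    _ = _ := by rw [div_div]; congr 1; ring
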